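/- Finite-sum primal decomposition: let {U^(i)} be row-orthonormal matrices with U^(i)(U^(i))ᵀ = I and U^(i)(U^(j))ᵀ = 0 for i ≠ j (similarly {V^(i)}), and define f̄(x,y) = (1/n)∑_i [H_d(U^(i)x, V^(i)y) + c·Γ_d^n(x)] as in the averaged-smooth hard instance, whose y-quadratic term is −(λ₂/n)‖y‖². Then the primal function Φ̄(x) = max_y f̄(x,y) equals (1/n) ∑_{i=1}^n Φ_d(U^(i) x), where Φ_d is the primal function of the single-block hard instance. -/

import Mathlib

open scoped BigOperators

/-- The matrix `B_d ∈ ℝ^{(d+2)×(d+1)}` of the hard instance (0-indexed). -/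
noncomputable def Bmat (d : ℕ) (α : ℝ) : Matrix (Fin (d + 2)) (Fin (d + 1)) ℝ :=
  fun i j =>
    if (i : ℕ) = 0 then (if (j : ℕ) = d then 1 else 0)
    else if (i : ℕ) = d + 1 then (if (j : ℕ) = 0 then α ^ ((1 : ℝ) / 4) else 0)
    else if (j : ℕ) = d - (i : ℕ) then 1
    else if (j : ℕ) = d - (i : ℕ) + 1 then -1
    else 0

/-- `A_d = B_dᵀ B_d − e_{d+1} e_{d+1}ᵀ`. -/
noncomputable def Amat (d : ℕ) (α : ℝ) : Matrix (Fin (d + 1)) (Fin (d + 1)) ℝ :=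
  (Bmat d α).transpose * Bmat d α - Matrix.single (Fin.last d) (Fin.last d) 1

/-- `Γ(t) = 120 ∫_1^t s²(s−1)/(1+s²) ds`. -/
noncomputable def Gam (t : ℝ) : ℝ := 120 * ∫ s in (1 : ℝ)..t, s ^ 2 * (s - 1) / (1 + s ^ 2)

/-- `Γ_d(u) = ∑_{j=1}^d Γ(u_j)`. -/
noncomputable def Gamd (d : ℕ) (u : Fin (d + 1) → ℝ) : ℝ := ∑ i : Fin d, Gam (u i.castSucc)

/-- The block `H_d` of the finite-sum hard instance. -/
noncomputable def Hd (d : ℕ) (α lam1 lam2 : ℝ) (u : Fin (d + 1) → ℝ)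
    (v : Fin (d + 2) → ℝ) : ℝ :=
  lam1 * dotProduct ((Bmat d α).mulVec u) v - lam2 * dotProduct v v
    - lam1 ^ 2 * Real.sqrt α / (2 * lam2) * u 0
    - lam1 ^ 2 * α / (4 * lam2) * (u (Fin.last d)) ^ 2
    + lam1 ^ 2 * Real.sqrt α / (4 * lam2)

/-- The primal function `Φ_d` of the single-block hard instance. -/
noncomputable def Phid (d : ℕ) (α lam1 lam2 : ℝ) (u : Fin (d + 1) → ℝ) : ℝ :=
  lam1 ^ 2 / (2 * lam2) *
    ((1 / 2) * dotProduct u ((Amat d α).mulVec u)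
      - Real.sqrt α * u 0 + Real.sqrt α / 2
      + α * Gamd d u + (1 - α) / 2 * (u (Fin.last d)) ^ 2)

/-! Orthonormality of the rows of each `V⁽ⁱ⁾` and orthogonality across blocks give
`V⁽ⁱ⁾ y* = (λ₁/(2λ₂)) B_d U⁽ⁱ⁾x` for every `i`, so the single point `y*` maximizes every
concave block `v ↦ H_d(U⁽ⁱ⁾x, v)` at once; the maximum of each block, together with its share
of the `Γ` term, is `Φ_d(U⁽ⁱ⁾x)` because `A_d = B_dᵀB_d − e_{d+1}e_{d+1}ᵀ`. -/

open Matrix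

theorem mulVec_sum_transpose_mulVec_of_orthonormal {ι R m N : Type*} [Fintype ι] [DecidableEq ι]
    [CommSemiring R] [Fintype m] [DecidableEq m] [Fintype N]
    (V : ι → Matrix m N R) (hV : ∀ i, V i * (V i)ᵀ = 1)
    (hV' : ∀ i j, i ≠ j → V i * (V j)ᵀ = 0) (w : ι → m → R) (i : ι) :
    V i *ᵥ ∑ k, (V k)ᵀ *ᵥ w k = w i := by
  rw [mulVec_sum, Finset.sum_eq_single i]
  · rw [mulVec_mulVec, hV i, one_mulVec]
  · intro k _ hk
    rw [mulVec_mulVec, hV' i k (Ne.symm hk), zero_mulVec]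
  · exact absurd (Finset.mem_univ i)

section ConcaveQuadratic

variable {ι : Type*} [Fintype ι] {a b : ℝ} (u v : ι → ℝ)

theorem mul_dotProduct_sub_mul_dotProduct_self_le (hb : 0 < b) :
    a * (u ⬝ᵥ v) - b * (v ⬝ᵥ v) ≤ a ^ 2 / (4 * b) * (u ⬝ᵥ u) := by
  have hsq : 0 ≤ ((2 * b) • v - a • u) ⬝ᵥ ((2 * b) • v - a • u) :=
    Finset.sum_nonneg fun _ _ => mul_self_nonneg _
  simp only [sub_dotProduct, dotProduct_sub, smul_dotProduct, dotProduct_smul, smul_eq_mul,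
    dotProduct_comm v u] at hsq
  rw [div_mul_eq_mul_div, le_div_iff₀ (by positivity)]
  nlinarith

theorem mul_dotProduct_sub_mul_dotProduct_self_smul (hb : b ≠ 0) :
    a * (u ⬝ᵥ (a / (2 * b)) • u) - b * ((a / (2 * b)) • u ⬝ᵥ (a / (2 * b)) • u)
      = a ^ 2 / (4 * b) * (u ⬝ᵥ u) := by
  simp only [smul_dotProduct, dotProduct_smul, smul_eq_mul]
  field_simp
  ring

end ConcaveQuadratic

theorem sum_const_div_card_mul_sum {ι : Type*} [Fintype ι] (a : ℝ) (f : ι → ℝ) :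
    ∑ _i : ι, a / Fintype.card ι * ∑ j, f j = a * ∑ j, f j := by
  rcases isEmpty_or_nonempty ι with _ | _
  · simp
  · rw [Finset.sum_const, Finset.card_univ, nsmul_eq_mul]
    field_simp

section HardInstance

variable (d : ℕ) (α lam1 lam2 : ℝ) (u : Fin (d + 1) → ℝ)

theorem Hd_le_Hd_smul_Bmat_mulVec (h2 : 0 < lam2) (v : Fin (d + 2) → ℝ) :
    Hd d α lam1 lam2 u v ≤ Hd d α lam1 lam2 u ((lam1 / (2 * lam2)) • Bmat d α *ᵥ u) := by
  have hle := mul_dotProduct_sub_mul_dotProduct_self_le (a := lam1) (Bmat d α *ᵥ u) v h2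
  have hmax := mul_dotProduct_sub_mul_dotProduct_self_smul (a := lam1) (Bmat d α *ᵥ u) h2.ne'
  unfold Hd
  linarith

theorem dotProduct_Amat_mulVec :
    u ⬝ᵥ Amat d α *ᵥ u = (Bmat d α *ᵥ u ⬝ᵥ Bmat d α *ᵥ u) - u (Fin.last d) ^ 2 := by
  rw [Amat, sub_mulVec, dotProduct_sub, ← mulVec_mulVec, dotProduct_mulVec, vecMul_transpose,
    single_mulVec, ← Pi.single, dotProduct_single, one_mul, sq]

theorem Hd_smul_Bmat_mulVec_add_Gamd (h2 : lam2 ≠ 0) :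
    Hd d α lam1 lam2 u ((lam1 / (2 * lam2)) • Bmat d α *ᵥ u)
        + lam1 ^ 2 * α / (2 * lam2) * Gamd d u = Phid d α lam1 lam2 u := by
  have hmax := mul_dotProduct_sub_mul_dotProduct_self_smul (a := lam1) (Bmat d α *ᵥ u) h2
  rw [Hd, Phid, dotProduct_Amat_mulVec, hmax]
  field_simp
  ring

end HardInstance

theorem finite_sum_primal_decomposition_general
    (n d N1 N2 : ℕ) (α lam1 lam2 : ℝ)
    (h2 : 0 < lam2)
    (U : Fin n → Matrix (Fin (d + 1)) (Fin N1) ℝ)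
    (V : Fin n → Matrix (Fin (d + 2)) (Fin N2) ℝ)
    (hV : ∀ i, V i * (V i).transpose = 1)
    (hV' : ∀ i j, i ≠ j → V i * (V j).transpose = 0) :
    ∀ x : Fin N1 → ℝ,
      IsMaxOn
        (fun y : Fin N2 → ℝ => (1 / n : ℝ) * ∑ i,
          (Hd d α lam1 lam2 ((U i).mulVec x) ((V i).mulVec y)
            + lam1 ^ 2 * α / (2 * n * lam2) * ∑ j, Gamd d ((U j).mulVec x)))
        Set.univ
        ((lam1 / (2 * lam2)) •
          ∑ i, (V i).transpose.mulVec ((Bmat d α).mulVec ((U i).mulVec x))) ∧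
      (1 / n : ℝ) * ∑ i,
          (Hd d α lam1 lam2 ((U i).mulVec x)
              ((V i).mulVec ((lam1 / (2 * lam2)) •
                ∑ k, (V k).transpose.mulVec ((Bmat d α).mulVec ((U k).mulVec x))))
            + lam1 ^ 2 * α / (2 * n * lam2) * ∑ j, Gamd d ((U j).mulVec x))
        = (1 / n : ℝ) * ∑ i, Phid d α lam1 lam2 ((U i).mulVec x) := by
  intro x
  have hV_maximizer : ∀ i, V i *ᵥ ((lam1 / (2 * lam2)) • ∑ k, (V k)ᵀ *ᵥ Bmat d α *ᵥ U k *ᵥ x)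
      = (lam1 / (2 * lam2)) • Bmat d α *ᵥ U i *ᵥ x := fun i => by
    rw [mulVec_smul, mulVec_sum_transpose_mulVec_of_orthonormal V hV hV']
  refine ⟨fun y _ => ?_, ?_⟩
  · simp only [Set.mem_ofPred_eq, hV_maximizer]
    gcongr with i
    exact Hd_le_Hd_smul_Bmat_mulVec d α lam1 lam2 _ h2 _
  · have hGam : lam1 ^ 2 * α / (2 * n * lam2)
        = lam1 ^ 2 * α / (2 * lam2) / Fintype.card (Fin n) := by
      rw [Fintype.card_fin]; ring
    simp only [hV_maximizer, Finset.sum_add_distrib, hGam, sum_const_div_card_mul_sum]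
    rw [Finset.mul_sum, ← Finset.sum_add_distrib]
    simp only [Hd_smul_Bmat_mulVec_add_Gamd d α lam1 lam2 _ h2.ne']

/-- Finite-sum primal decomposition: with mutually orthogonal
row-orthonormal embeddings `U⁽ⁱ⁾, V⁽ⁱ⁾`, and
`f̄(x,y) = (1/n) ∑ᵢ [H_d(U⁽ⁱ⁾x, V⁽ⁱ⁾y) + (λ₁²α/(2nλ₂)) Γ_dⁿ(x)]`
(whose `y`-quadratic is `−(λ₂/n)‖y‖²`), the maximizer over `y` is
`y*(x) = (λ₁/(2λ₂)) ∑ᵢ (V⁽ⁱ⁾)ᵀ B_d U⁽ⁱ⁾x` and the primal function satisfies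
`Φ̄(x) = max_y f̄(x,y) = (1/n) ∑ᵢ Φ_d(U⁽ⁱ⁾x)`. -/
theorem finite_sum_primal_decomposition
    (n d N1 N2 : ℕ) (hn : 0 < n) (α lam1 lam2 : ℝ)
    (hα : α ∈ Set.Icc (0 : ℝ) 1) (h1 : 0 < lam1) (h2 : 0 < lam2)
    (U : Fin n → Matrix (Fin (d + 1)) (Fin N1) ℝ)
    (V : Fin n → Matrix (Fin (d + 2)) (Fin N2) ℝ)
    (hU : ∀ i, U i * (U i).transpose = 1)
    (hU' : ∀ i j, i ≠ j → U i * (U j).transpose = 0)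
    (hV : ∀ i, V i * (V i).transpose = 1)
    (hV' : ∀ i j, i ≠ j → V i * (V j).transpose = 0) :
    ∀ x : Fin N1 → ℝ,
      IsMaxOn
        (fun y : Fin N2 → ℝ => (1 / n : ℝ) * ∑ i,
          (Hd d α lam1 lam2 ((U i).mulVec x) ((V i).mulVec y)
            + lam1 ^ 2 * α / (2 * n * lam2) * ∑ j, Gamd d ((U j).mulVec x)))
        Set.univ
        ((lam1 / (2 * lam2)) •
          ∑ i, (V i).transpose.mulVec ((Bmat d α).mulVec ((U i).mulVec x))) ∧
      (1 / n : ℝ) * ∑ i,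
          (Hd d α lam1 lam2 ((U i).mulVec x)
              ((V i).mulVec ((lam1 / (2 * lam2)) •
                ∑ k, (V k).transpose.mulVec ((Bmat d α).mulVec ((U k).mulVec x))))
            + lam1 ^ 2 * α / (2 * n * lam2) * ∑ j, Gamd d ((U j).mulVec x))
        = (1 / n : ℝ) * ∑ i, Phid d α lam1 lam2 ((U i).mulVec x) :=
  finite_sum_primal_decomposition_general n d N1 N2 α lam1 lam2 h2 U V hV hV'
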